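/- Let G be a compact Hausdorff abelian topological group, let E be a finite subextension of Q̄_ℓ/ℚ_ℓ, and let χ : G → O_E^×/μ_E be a continuous group homomorphism. Then there exist a continuous group homomorphism ξ : G → O_E^× and an integer n ≥ 1 such that the composition of ξ with the quotient map O_E^× → O_E^×/μ_E equals χ^n. -/

import Mathlib

/-! Setup: `K` plays the role of `Q̄_ℓ`: an algebraic closure of `ℚ_ℓ`, viewed as a
normed field whose norm extends the `ℓ`-adic absolute value (this determines the
topology, such an extension being unique).  `mu K` is the group `μ` of roots of
unity of `K`; for a subextension `E`, `unitBall l K E` is the group `O_E^×`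
(elements of `E` of absolute value one) and `muSub l K E` is `μ_E`, so that
`↥(unitBall l K E) ⧸ muSub l K E` is `O_E^×/μ_E` with its quotient topology. -/

/-- The group `μ` of roots of unity of `K`, as a subgroup of `Kˣ`. -/
def mu (K : Type*) [Field K] : Subgroup Kˣ where
  carrier := {x | ∃ n : ℕ, 0 < n ∧ x ^ n = 1}
  one_mem' := ⟨1, Nat.one_pos, one_pow 1⟩
  mul_mem' := by
    rintro a b ⟨m, hm, ha⟩ ⟨n, hn, hb⟩
    refine ⟨m * n, Nat.mul_pos hm hn, ?_⟩
    rw [mul_pow, pow_mul, ha, one_pow, one_mul, pow_mul', hb, one_pow]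
  inv_mem' := by
    rintro a ⟨n, hn, ha⟩
    exact ⟨n, hn, by rw [inv_pow, ha, inv_one]⟩

/-- `O_E^×`, the unit group of the ring of integers `O_E = E ∩ Z̄_ℓ` of a
subextension `E`, realized as the subgroup of `Kˣ` of elements of `E` of
absolute value `1`. -/
def unitBall (l : ℕ) [Fact l.Prime] (K : Type*) [NormedField K] [Algebra ℚ_[l] K]
    (E : IntermediateField ℚ_[l] K) : Subgroup Kˣ where
  carrier := {x | (x : K) ∈ E ∧ ‖(x : K)‖ = 1}
  one_mem' := ⟨by simpa using E.one_mem, by simp⟩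
  mul_mem' := by
    rintro a b ⟨haE, ha⟩ ⟨hbE, hb⟩
    exact ⟨by simpa using E.mul_mem haE hbE, by simp [ha, hb]⟩
  inv_mem' := by
    rintro a ⟨haE, ha⟩
    exact ⟨by simpa using E.inv_mem haE, by simp [ha]⟩

/-- `μ_E`, the group of roots of unity of `E`, as a subgroup of `O_E^×`. -/
def muSub (l : ℕ) [Fact l.Prime] (K : Type*) [NormedField K] [Algebra ℚ_[l] K]
    (E : IntermediateField ℚ_[l] K) : Subgroup ↥(unitBall l K E) :=
  (mu K).subgroupOf (unitBall l K E)

/-! If `ζ ≠ 1` has prime order `p`, then `p = ∑_{i<p} (1 - ζ^i)`, so the ultrametric inequality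
gives `ℓ⁻¹ ≤ |p| ≤ |ζ - 1|`; passing to a power of prime order extends this to every root of
unity `ζ ≠ 1`. Hence the roots of unity of `E` are `ℓ⁻¹`-separated in its compact unit ball, and
`μ_E` is finite. Then `x ↦ x ^ |μ_E|` factors through `O_E^×/μ_E`, and composing it with `χ`
gives `ξ` with `n = |μ_E|`. -/

open Metric

theorem TotallyBounded.finite_of_pairwise_le_dist {α : Type*} [PseudoMetricSpace α] {s : Set α}
    (hs : TotallyBounded s) {ε : ℝ} (hε : 0 < ε) (hsep : s.Pairwise fun x y => ε ≤ dist x y) :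
    s.Finite := by
  obtain ⟨t, hts, htfin, hcov⟩ := finite_approx_of_totallyBounded hs ε hε
  refine htfin.subset fun x hx => ?_
  obtain ⟨y, hyt, hxy⟩ := Set.mem_iUnion₂.mp (hcov hx)
  by_contra hxt
  exact (hsep hx (hts hyt) (ne_of_mem_of_not_mem hyt hxt).symm).not_gt (mem_ball.mp hxy)

section Ultrametric

variable {F : Type*} [NormedField F] [IsUltrametricDist F]

theorem norm_pow_sub_one_le_norm_sub_one {x : F} (hx : ‖x‖ ≤ 1) (k : ℕ) :
    ‖x ^ k - 1‖ ≤ ‖x - 1‖ := by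
  induction k with
  | zero => simp
  | succ k ih =>
    calc ‖x ^ (k + 1) - 1‖ = ‖x * (x ^ k - 1) + (x - 1)‖ := by ring_nf
      _ ≤ max ‖x * (x ^ k - 1)‖ ‖x - 1‖ := IsUltrametricDist.norm_add_le_max _ _
      _ ≤ ‖x - 1‖ := by
        refine max_le ?_ le_rfl
        rw [norm_mul]
        exact (mul_le_of_le_one_left (norm_nonneg _) hx).trans ih

theorem norm_natCast_le_norm_sub_one_of_pow_eq_one {η : F} (hη : η ≠ 1) {n : ℕ}
    (hn : η ^ n = 1) : ‖(n : F)‖ ≤ ‖η - 1‖ := by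
  rcases n.eq_zero_or_pos with rfl | hpos
  · simp
  have hnorm : ‖η‖ ≤ 1 := (isOfFinOrder_iff_pow_eq_one.mpr ⟨n, hpos, hn⟩).norm_eq_one.le
  have hgeom : ∑ i ∈ Finset.range n, η ^ i = 0 := by
    have h := geom_sum_mul η n
    rw [hn, sub_self] at h
    exact (mul_eq_zero.mp h).resolve_right (sub_ne_zero.mpr hη)
  have hsum : (n : F) = ∑ i ∈ Finset.range n, (1 - η ^ i) := by
    simp [Finset.sum_sub_distrib, hgeom]
  rw [hsum]
  refine IsUltrametricDist.norm_sum_le_of_forall_le_of_nonneg (norm_nonneg _) fun i _ => ?_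
  rw [norm_sub_rev]
  exact norm_pow_sub_one_le_norm_sub_one hnorm i

theorem IsOfFinOrder.exists_prime_norm_natCast_le_norm_sub_one {ζ : F} (hζ : IsOfFinOrder ζ)
    (hζ1 : ζ ≠ 1) : ∃ p : ℕ, p.Prime ∧ ‖(p : F)‖ ≤ ‖ζ - 1‖ := by
  set p := (orderOf ζ).minFac
  have hp : p.Prime := Nat.minFac_prime fun h => hζ1 (orderOf_eq_one_iff.mp h)
  set η := ζ ^ (orderOf ζ / p)
  have hη : orderOf η = p := orderOf_pow_orderOf_div hζ.orderOf_pos.ne' (Nat.minFac_dvd _)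
  have hη1 : η ≠ 1 := fun h => hp.one_lt.ne' (by rw [← hη, h, orderOf_one])
  refine ⟨p, hp, ?_⟩
  calc ‖(p : F)‖ ≤ ‖η - 1‖ :=
        norm_natCast_le_norm_sub_one_of_pow_eq_one hη1 (hη ▸ pow_orderOf_eq_one η)
    _ ≤ ‖ζ - 1‖ := norm_pow_sub_one_le_norm_sub_one hζ.norm_eq_one.le _

theorem pairwise_le_dist_setOf_isOfFinOrder {c : ℝ} (hc : ∀ p : ℕ, p.Prime → c ≤ ‖(p : F)‖) :
    {x : F | IsOfFinOrder x}.Pairwise fun x y => c ≤ dist x y := by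
  intro x (hx : IsOfFinOrder x) y (hy : IsOfFinOrder y) hxy
  have hy0 : y ≠ 0 := by rintro rfl; simpa using hy.norm_eq_one
  have hyinv : IsOfFinOrder y⁻¹ := by
    obtain ⟨n, hn, h⟩ := isOfFinOrder_iff_pow_eq_one.mp hy
    exact isOfFinOrder_iff_pow_eq_one.mpr ⟨n, hn, by rw [inv_pow, h, inv_one]⟩
  obtain ⟨p, hp, hle⟩ := (hx.mul hyinv).exists_prime_norm_natCast_le_norm_sub_one
    (by rwa [Ne, mul_inv_eq_one₀ hy0])
  calc c ≤ ‖(p : F)‖ := hc p hp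
    _ ≤ ‖x * y⁻¹ - 1‖ := hle
    _ = ‖(x - y) * y⁻¹‖ := by rw [sub_mul, mul_inv_cancel₀ hy0]
    _ = dist x y := by rw [norm_mul, norm_inv, hy.norm_eq_one, inv_one, mul_one, dist_eq_norm]

theorem finite_setOf_isOfFinOrder [ProperSpace F] {c : ℝ} (hc0 : 0 < c)
    (hc : ∀ p : ℕ, p.Prime → c ≤ ‖(p : F)‖) : {x : F | IsOfFinOrder x}.Finite := by
  refine TotallyBounded.finite_of_pairwise_le_dist ?_ hc0 (pairwise_le_dist_setOf_isOfFinOrder hc)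
  refine (isCompact_closedBall (0 : F) 1).totallyBounded.subset fun x (hx : IsOfFinOrder x) => ?_
  simpa using hx.norm_eq_one.le

end Ultrametric

theorem Padic.inv_le_norm_natCast_of_prime {p q : ℕ} [hp : Fact p.Prime] (hq : q.Prime) :
    (p : ℝ)⁻¹ ≤ ‖(q : ℚ_[p])‖ := by
  by_cases hpq : p = q
  · subst hpq; rw [Padic.norm_p]
  · rw [(Padic.norm_natCast_eq_one_iff).mpr ((Nat.coprime_primes hp.out hq).mpr hpq)]
    exact inv_le_one_of_one_le₀ (mod_cast hp.out.one_lt.le)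

theorem finite_setOf_isOfFinOrder_of_finiteDimensional_padic {p : ℕ} [Fact p.Prime]
    (F : Type*) [NormedField F] [NormedAlgebra ℚ_[p] F] [FiniteDimensional ℚ_[p] F] :
    {x : F | IsOfFinOrder x}.Finite := by
  have := IsUltrametricDist.of_normedAlgebra ℚ_[p] (L := F)
  have := FiniteDimensional.proper ℚ_[p] F
  have hp : 0 < (p : ℝ)⁻¹ := inv_pos.mpr (mod_cast (Fact.out : p.Prime).pos)
  refine finite_setOf_isOfFinOrder hp fun q hq => ?_
  rw [← map_natCast (algebraMap ℚ_[p] F), norm_algebraMap']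
  exact Padic.inv_le_norm_natCast_of_prime hq

theorem finite_muSub {l : ℕ} [Fact l.Prime] {K : Type*} [NormedField K] [Algebra ℚ_[l] K]
    (hnorm : ∀ x : ℚ_[l], ‖algebraMap ℚ_[l] K x‖ = ‖x‖) (E : IntermediateField ℚ_[l] K)
    [FiniteDimensional ℚ_[l] E] : Finite (muSub l K E) := by
  let _ : NormedAlgebra ℚ_[l] K :=
    { norm_smul_le := fun a x => by rw [Algebra.smul_def, norm_mul, hnorm] }
  have := (finite_setOf_isOfFinOrder_of_finiteDimensional_padic (p := l) E).to_subtype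
  refine Finite.of_injective (β := {x : E | IsOfFinOrder x})
    (fun u => ⟨⟨((u : unitBall l K E) : Kˣ), u.1.2.1⟩, ?_⟩) fun u v huv => ?_
  · obtain ⟨n, hn, hu⟩ := u.2
    refine isOfFinOrder_iff_pow_eq_one.mpr ⟨n, hn, Subtype.ext ?_⟩
    simpa using congrArg Units.val hu
  · exact Subtype.ext (Subtype.ext (Units.ext
      (congrArg (fun x : {x : E | IsOfFinOrder x} => ((x : E) : K)) huv)))

theorem QuotientGroup.exists_continuous_lift_pow {A : Type*} [CommGroup A] [TopologicalSpace A]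
    [ContinuousMul A] (H : Subgroup A) [Finite H] {G : Type*} [MulOneClass G]
    [TopologicalSpace G] (χ : G →* A ⧸ H) (hχ : Continuous χ) :
    ∃ (ξ : G →* A) (n : ℕ), Continuous ξ ∧ 0 < n ∧
      ∀ g : G, QuotientGroup.mk' H (ξ g) = χ g ^ n := by
  let ψ : A ⧸ H →* A := QuotientGroup.lift H (powMonoidHom (Nat.card H))
    fun x hx => congrArg Subtype.val (pow_card_eq_one' (G := H) (x := ⟨x, hx⟩))
  have hψ : Continuous ψ :=
    (QuotientGroup.isQuotientMap_mk H).continuous_iff.mpr (continuous_pow (Nat.card H))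
  refine ⟨ψ.comp χ, Nat.card H, hψ.comp hχ, Nat.card_pos, fun g => ?_⟩
  obtain ⟨x, hx⟩ := QuotientGroup.mk'_surjective H (χ g)
  rw [MonoidHom.comp_apply, ← hx]
  rfl

theorem continuous_char_lifts_power_general
    {l : ℕ} [Fact l.Prime]
    (K : Type*) [NormedField K] [Algebra ℚ_[l] K]
    (hnorm : ∀ x : ℚ_[l], ‖algebraMap ℚ_[l] K x‖ = ‖x‖)
    (G : Type*) [CommGroup G] [TopologicalSpace G]
    (E : IntermediateField ℚ_[l] K) [FiniteDimensional ℚ_[l] E]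
    (χ : G →* ↥(unitBall l K E) ⧸ muSub l K E) (hχ : Continuous χ) :
    ∃ (ξ : G →* ↥(unitBall l K E)) (n : ℕ), Continuous ξ ∧ 0 < n ∧
      ∀ g : G, QuotientGroup.mk' (muSub l K E) (ξ g) = χ g ^ n := by
  have := finite_muSub hnorm E
  exact QuotientGroup.exists_continuous_lift_pow _ χ hχ

/-- Let `G` be a compact Hausdorff abelian topological group, `E` a
finite subextension of `Q̄_ℓ/ℚ_ℓ` and `χ : G → O_E^×/μ_E` a continuous
homomorphism.  Then there exist a continuous homomorphism `ξ : G → O_E^×` and an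
integer `n ≥ 1` such that the composition of `ξ` with the quotient map
`O_E^× → O_E^×/μ_E` equals `χ^n`. -/
theorem continuous_char_lifts_power
    {l : ℕ} [Fact l.Prime]
    (K : Type*) [NormedField K] [Algebra ℚ_[l] K] [IsAlgClosure ℚ_[l] K]
    (hnorm : ∀ x : ℚ_[l], ‖algebraMap ℚ_[l] K x‖ = ‖x‖)
    (G : Type*) [CommGroup G] [TopologicalSpace G] [IsTopologicalGroup G]
    [CompactSpace G] [T2Space G]
    (E : IntermediateField ℚ_[l] K) [FiniteDimensional ℚ_[l] E]
    (χ : G →* ↥(unitBall l K E) ⧸ muSub l K E) (hχ : Continuous χ) :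
    ∃ (ξ : G →* ↥(unitBall l K E)) (n : ℕ), Continuous ξ ∧ 0 < n ∧
      ∀ g : G, QuotientGroup.mk' (muSub l K E) (ξ g) = χ g ^ n :=
  continuous_char_lifts_power_general K hnorm G E χ hχ
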